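/- arXiv:math/0210219 — 5 statements merged into one kernel-verified Lean document; each statement's English description precedes it below -/
import Mathlib

section
/- Let V be a finite-dimensional real vector space with a symmetric bilinear form ⟨·,·⟩, extended ℂ-bilinearly to V_ℂ = ℂ ⊗ V. (a) For every x ∈ V_ℂ with ⟨x,x⟩ = 0 and ⟨x + x̄, x + x̄⟩ > 0, the real span W_x of Re(x) and Im(x) is a 2-dimensional subspace of V on which the form is positive definite, and W_x depends only on the class [x] ∈ ℙ(V_ℂ). (b) Every 2-dimensional subspace W ⊂ V on which the form is positive definite equals W_x for some such x (e.g. x = w₁ + i w₂ for an orthonormal basis w₁, w₂ of W). (c) For two such elements x, y ∈ V_ℂ one has W_x = W_y if and only if [y] = [x] or [y] = [x̄] in ℙ(V_ℂ). -/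
/-!
Write `x = u + i v`. Isotropy of `x` says `b u u = b v v` and `b u v = 0`, so in the coordinates
`(p, q) ↦ p • u + q • v` the form on `span {u, v}` is `b u u` times the Euclidean inner product;
this gives (a). Conversely, an orthogonal basis of a positive-definite plane, rescaled to a common
length, is such a pair, which gives (b). For (c), a second pair `u', v'` in the same plane has
coordinates `(p, q)`, `(r, s)` with `p² + q² = r² + s²` and `p r + q s = 0`, which forces
`(r, s) = (-q, p)`, i.e. `u' + i v' = (p - i q) x`, or `(r, s) = (q, -p)`, i.e.
`u' + i v' = (p + i q) x̄`.
-/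

open Module Submodule

namespace Submodule

variable {K M : Type*} [Field K] [AddCommGroup M] [Module K M]

theorem span_pair_eq_of_det_ne_zero (u v : M) {c d e f : K} (h : c * f - d * e ≠ 0) :
    span K {c • u + d • v, e • u + f • v} = span K ({u, v} : Set M) := by
  refine le_antisymm (span_le.2 ?_) (span_le.2 ?_) <;> rintro w (rfl | rfl) <;>
    rw [SetLike.mem_coe, mem_span_pair]
  · exact ⟨c, d, rfl⟩
  · exact ⟨e, f, rfl⟩
  · refine ⟨f / (c * f - d * e), -d / (c * f - d * e), ?_⟩
    match_scalars
    · rw [div_mul_eq_mul_div, div_mul_eq_mul_div, ← add_div, div_eq_one_iff_eq h]; ring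
    · ring
  · refine ⟨-e / (c * f - d * e), c / (c * f - d * e), ?_⟩
    match_scalars
    · ring
    · rw [div_mul_eq_mul_div, div_mul_eq_mul_div, ← add_div, div_eq_one_iff_eq h]; ring

variable [LinearOrder K] [IsStrictOrderedRing K]

theorem span_rotate_pair_eq (u v : M) {s t : K} (hst : ¬(s = 0 ∧ t = 0)) :
    span K {s • u - t • v, s • v + t • u} = span K ({u, v} : Set M) := by
  have h : s * s - (-t) * t ≠ 0 := by
    rw [neg_mul, sub_neg_eq_add]; exact fun h ↦ hst (mul_self_add_mul_self_eq_zero.1 h)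
  rw [← span_pair_eq_of_det_ne_zero u v h]
  congr 3 <;> module

theorem span_reflect_pair_eq (u v : M) {s t : K} (hst : ¬(s = 0 ∧ t = 0)) :
    span K {s • u + t • v, t • u - s • v} = span K ({u, v} : Set M) := by
  have h : s * (-s) - t * t ≠ 0 := by
    rw [mul_neg, ← neg_add', neg_ne_zero]; exact fun h ↦ hst (mul_self_add_mul_self_eq_zero.1 h)
  rw [← span_pair_eq_of_det_ne_zero u v h]
  congr 3; module

end Submodule

theorem eq_neg_and_eq_or_eq_and_eq_neg_of_mul_self_add_mul_self_eq {K : Type*} [Field K]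
    [LinearOrder K] [IsStrictOrderedRing K] {p q r s : K}
    (hnorm : p * p + q * q = r * r + s * s) (horth : p * r + q * s = 0) :
    (r = -q ∧ s = p) ∨ (r = q ∧ s = -p) := by
  have key :
      ((r + q) * (r + q) + (s - p) * (s - p)) * ((r - q) * (r - q) + (s + p) * (s + p)) = 0 := by
    linear_combination (p * p + q * q - r * r - s * s) * hnorm + 4 * (p * r + q * s) * horth
  rcases mul_eq_zero.1 key with h | h <;> obtain ⟨h₁, h₂⟩ := mul_self_add_mul_self_eq_zero.1 h
  · exact .inl ⟨by linear_combination h₁, by linear_combination h₂⟩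
  · exact .inr ⟨by linear_combination h₁, by linear_combination h₂⟩

namespace LinearMap.BilinForm

/-- `(u, v)` is the pair of real and imaginary parts of a vector `u + i v` that is isotropic for
the bilinear extension of `b` to complex coefficients. -/
def IsIsotropicPair {R M : Type*} [CommRing R] [AddCommGroup M] [Module R M]
    (b : LinearMap.BilinForm R M) (u v : M) : Prop :=
  b u u = b v v ∧ b u v = 0

namespace IsIsotropicPair

section CommRing

variable {R M : Type*} [CommRing R] [AddCommGroup M] [Module R M] {b : LinearMap.BilinForm R M}
  {u v : M}

theorem apply_smul_add_smul (hb : b.IsSymm) (h : b.IsIsotropicPair u v) (p q r s : R) :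
    b (p • u + q • v) (r • u + s • v) = (p * r + q * s) * b u u := by
  have hvu : b v u = 0 := (hb.eq v u).trans h.2
  simp only [map_add, map_smul, LinearMap.add_apply, LinearMap.smul_apply, smul_eq_mul, h.2, hvu,
    ← h.1]
  ring

end CommRing

section OrderedField

variable {K M : Type*} [Field K] [LinearOrder K] [IsStrictOrderedRing K] [AddCommGroup M]
  [Module K M] {b : LinearMap.BilinForm K M} {u v : M}

theorem pos_of_mem_span (hb : b.IsSymm) (h : b.IsIsotropicPair u v) (hu : 0 < b u u) {w : M}
    (hw : w ∈ span K {u, v}) (hw₀ : w ≠ 0) : 0 < b w w := by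
  obtain ⟨p, q, rfl⟩ := mem_span_pair.1 hw
  have hpq : ¬(p = 0 ∧ q = 0) := by rintro ⟨rfl, rfl⟩; simp at hw₀
  rw [h.apply_smul_add_smul hb]
  exact mul_pos (lt_of_le_of_ne (add_nonneg (mul_self_nonneg p) (mul_self_nonneg q))
    (Ne.symm (mul_self_add_mul_self_eq_zero.not.2 hpq))) hu

theorem linearIndependent (hb : b.IsSymm) (h : b.IsIsotropicPair u v) (hu : 0 < b u u) :
    LinearIndependent K ![u, v] := by
  refine LinearIndependent.pair_iff.2 fun s t hst ↦ mul_self_add_mul_self_eq_zero.1 ?_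
  have := h.apply_smul_add_smul hb s t s t
  rw [hst, map_zero, eq_comm] at this
  exact (mul_eq_zero.1 this).resolve_right hu.ne'

theorem finrank_span (hb : b.IsSymm) (h : b.IsIsotropicPair u v) (hu : 0 < b u u) :
    finrank K (span K {u, v}) = 2 := by
  have := finrank_span_eq_card (h.linearIndependent hb hu)
  rwa [Fintype.card_fin, Matrix.range_cons_cons_empty] at this

theorem exists_rotation_or_reflection_of_mem_span (hb : b.IsSymm)
    (h : b.IsIsotropicPair u v) (hu : 0 < b u u) {u' v' : M} (h' : b.IsIsotropicPair u' v')
    (hu' : 0 < b u' u') (hu'_mem : u' ∈ span K {u, v}) (hv'_mem : v' ∈ span K {u, v}) :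
    ∃ s t : K, ¬(s = 0 ∧ t = 0) ∧
      ((u' = s • u - t • v ∧ v' = s • v + t • u) ∨ (u' = s • u + t • v ∧ v' = t • u - s • v)) := by
  obtain ⟨p, q, rfl⟩ := mem_span_pair.1 hu'_mem
  obtain ⟨r, s, rfl⟩ := mem_span_pair.1 hv'_mem
  have hnorm : p * p + q * q = r * r + s * s := by
    have := h'.1
    rwa [h.apply_smul_add_smul hb, h.apply_smul_add_smul hb, mul_left_inj' hu.ne'] at this
  have horth : p * r + q * s = 0 := by
    have := h'.2
    rwa [h.apply_smul_add_smul hb, mul_eq_zero, or_iff_left hu.ne'] at this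
  have hpq : ¬(p = 0 ∧ q = 0) := by rintro ⟨rfl, rfl⟩; simp at hu'
  rcases eq_neg_and_eq_or_eq_and_eq_neg_of_mul_self_add_mul_self_eq hnorm horth with
    ⟨hr, hs⟩ | ⟨hr, hs⟩
  · exact ⟨p, -q, by rwa [neg_eq_zero], .inl ⟨by module, by rw [hr, hs]; module⟩⟩
  · exact ⟨p, q, hpq, .inr ⟨rfl, by rw [hr, hs]; module⟩⟩

end OrderedField

end IsIsotropicPair

theorem exists_ne_zero_apply_eq_zero_of_two_le_finrank {K M : Type*} [Field K] [Invertible (2 : K)]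
    [AddCommGroup M] [Module K M] {b : LinearMap.BilinForm K M} (hb : b.IsSymm)
    {W : Submodule K M} (hW : 2 ≤ finrank K W) :
    ∃ a ∈ W, ∃ c ∈ W, a ≠ 0 ∧ c ≠ 0 ∧ b a c = 0 := by
  have : FiniteDimensional K W := Module.finite_of_finrank_pos (by omega)
  obtain ⟨e, he⟩ := exists_orthogonal_basis (isSymm_iff.1 (hb.restrict W))
  let i : Fin (finrank K W) := ⟨0, by omega⟩
  let j : Fin (finrank K W) := ⟨1, by omega⟩
  exact ⟨e i, (e i).2, e j, (e j).2, by simpa using e.ne_zero i, by simpa using e.ne_zero j,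
    he (by simp [i, j])⟩

variable {V : Type*} [AddCommGroup V] [Module ℝ V] {b : LinearMap.BilinForm ℝ V}

theorem exists_isIsotropicPair_span_eq (hb : b.IsSymm) {W : Submodule ℝ V}
    (hW : finrank ℝ W = 2) (hpos : ∀ w ∈ W, w ≠ 0 → 0 < b w w) :
    ∃ u v, b.IsIsotropicPair u v ∧ 0 < b u u ∧ span ℝ {u, v} = W := by
  obtain ⟨a, ha, c, hc, ha₀, hc₀, hac⟩ := exists_ne_zero_apply_eq_zero_of_two_le_finrank hb hW.ge
  have haa := hpos a ha ha₀
  have hcc := hpos c hc hc₀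
  set u := √(b c c) • a
  set v := √(b a a) • c
  have huu : b u u = b c c * b a a := by
    simp only [u, map_smul, LinearMap.smul_apply, smul_eq_mul, ← mul_assoc,
      Real.mul_self_sqrt hcc.le]
  have hvv : b v v = b a a * b c c := by
    simp only [v, map_smul, LinearMap.smul_apply, smul_eq_mul, ← mul_assoc,
      Real.mul_self_sqrt haa.le]
  have h : b.IsIsotropicPair u v :=
    ⟨huu.trans (mul_comm _ _ |>.trans hvv.symm), by simp [u, v, hac]⟩
  have hu : 0 < b u u := huu ▸ mul_pos hcc haa
  have : FiniteDimensional ℝ W := Module.finite_of_finrank_eq_succ hW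
  refine ⟨u, v, h, hu, eq_of_le_of_finrank_eq (span_le.2 ?_) (by rw [h.finrank_span hb hu, hW])⟩
  rintro _ (rfl | rfl)
  exacts [W.smul_mem _ ha, W.smul_mem _ hc]

end LinearMap.BilinForm

/-- An element `x ∈ V_ℂ` is represented by the pair `(xr, xi)` with `x = xr + i·xi`. Then
`⟨x,x⟩ = 0` reads `b xr xr = b xi xi ∧ b xr xi = 0`, and `⟨x + x̄, x + x̄⟩ > 0` reads
`0 < b xr xr`. Multiplication by `c = s + i·t` sends `(xr, xi)` to `(s•xr − t•xi, s•xi + t•xr)`,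
conjugation sends `(xr, xi)` to `(xr, −xi)`, and two elements give the same point of `ℙ(V_ℂ)` iff
one is a nonzero complex multiple of the other. -/
theorem stmt2_general {V : Type*} [AddCommGroup V] [Module ℝ V]
    (b : LinearMap.BilinForm ℝ V) (hsymm : ∀ x y, b x y = b y x) :
    -- (a) W_x is a positive-definite plane, depending only on the class [x] ∈ ℙ(V_ℂ)
    (∀ xr xi : V, b xr xr = b xi xi → b xr xi = 0 → 0 < b xr xr →
      Module.finrank ℝ (Submodule.span ℝ ({xr, xi} : Set V)) = 2 ∧
      (∀ w ∈ Submodule.span ℝ ({xr, xi} : Set V), w ≠ 0 → 0 < b w w) ∧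
      (∀ s t : ℝ, ¬(s = 0 ∧ t = 0) →
        Submodule.span ℝ ({s • xr - t • xi, s • xi + t • xr} : Set V) =
          Submodule.span ℝ ({xr, xi} : Set V))) ∧
    -- (b) every positive-definite plane W ⊂ V arises as W_x for some such x
    (∀ W : Submodule ℝ V, Module.finrank ℝ W = 2 →
      (∀ w ∈ W, w ≠ 0 → 0 < b w w) →
      ∃ xr xi : V, b xr xr = b xi xi ∧ b xr xi = 0 ∧ 0 < b xr xr ∧
        Submodule.span ℝ ({xr, xi} : Set V) = W) ∧
    -- (c) W_x = W_y iff [y] = [x] or [y] = [x̄] in ℙ(V_ℂ)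
    (∀ xr xi yr yi : V,
      b xr xr = b xi xi → b xr xi = 0 → 0 < b xr xr →
      b yr yr = b yi yi → b yr yi = 0 → 0 < b yr yr →
      (Submodule.span ℝ ({xr, xi} : Set V) = Submodule.span ℝ ({yr, yi} : Set V) ↔
        ∃ s t : ℝ, ¬(s = 0 ∧ t = 0) ∧
          ((yr = s • xr - t • xi ∧ yi = s • xi + t • xr) ∨
           (yr = s • xr + t • xi ∧ yi = t • xr - s • xi)))) := by
  have hb : b.IsSymm := ⟨hsymm⟩
  refine ⟨fun xr xi hx₁ hx₂ hx ↦ ?_, fun W hW hpos ↦ ?_,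
    fun xr xi yr yi hx₁ hx₂ hx hy₁ hy₂ hy ↦ ⟨fun hspan ↦ ?_, ?_⟩⟩
  · have h : b.IsIsotropicPair xr xi := ⟨hx₁, hx₂⟩
    exact ⟨h.finrank_span hb hx, fun w ↦ h.pos_of_mem_span hb hx,
      fun s t ↦ span_rotate_pair_eq xr xi⟩
  · obtain ⟨u, v, ⟨h₁, h₂⟩, hu, hspan⟩ :=
      LinearMap.BilinForm.exists_isIsotropicPair_span_eq hb hW hpos
    exact ⟨u, v, h₁, h₂, hu, hspan⟩
  · have h : b.IsIsotropicPair xr xi := ⟨hx₁, hx₂⟩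
    exact h.exists_rotation_or_reflection_of_mem_span hb hx ⟨hy₁, hy₂⟩ hy
      (hspan ▸ subset_span (.inl rfl)) (hspan ▸ subset_span (.inr rfl))
  · rintro ⟨s, t, hst, ⟨rfl, rfl⟩ | ⟨rfl, rfl⟩⟩
    exacts [(span_rotate_pair_eq xr xi hst).symm, (span_reflect_pair_eq xr xi hst).symm]

/-- We represent an element `x ∈ V_ℂ = ℂ ⊗ V` by the pair `(xr, xi)` of its real
and imaginary parts, so that `x = xr + i·xi`.  For the ℂ-bilinear extension of a symmetric
bilinear form `b`, the condition `⟨x,x⟩ = 0` reads `b xr xr = b xi xi ∧ b xr xi = 0`, and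
`⟨x + x̄, x + x̄⟩ > 0` reads `0 < b xr xr`.  Multiplication by a nonzero complex scalar
`c = s + i·t` sends `(xr, xi)` to `(s•xr − t•xi, s•xi + t•xr)`, and conjugation sends
`(xr, xi)` to `(xr, −xi)`; two elements give the same point of `ℙ(V_ℂ)` iff one is a nonzero
complex multiple of the other.  `W_x = span_ℝ(Re x, Im x)`. -/
theorem stmt2 {V : Type*} [AddCommGroup V] [Module ℝ V] [FiniteDimensional ℝ V]
    (b : LinearMap.BilinForm ℝ V) (hsymm : ∀ x y, b x y = b y x) :
    -- (a) W_x is a positive-definite plane, depending only on the class [x] ∈ ℙ(V_ℂ)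
    (∀ xr xi : V, b xr xr = b xi xi → b xr xi = 0 → 0 < b xr xr →
      Module.finrank ℝ (Submodule.span ℝ ({xr, xi} : Set V)) = 2 ∧
      (∀ w ∈ Submodule.span ℝ ({xr, xi} : Set V), w ≠ 0 → 0 < b w w) ∧
      (∀ s t : ℝ, ¬(s = 0 ∧ t = 0) →
        Submodule.span ℝ ({s • xr - t • xi, s • xi + t • xr} : Set V) =
          Submodule.span ℝ ({xr, xi} : Set V))) ∧
    -- (b) every positive-definite plane W ⊂ V arises as W_x for some such x
    (∀ W : Submodule ℝ V, Module.finrank ℝ W = 2 →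
      (∀ w ∈ W, w ≠ 0 → 0 < b w w) →
      ∃ xr xi : V, b xr xr = b xi xi ∧ b xr xi = 0 ∧ 0 < b xr xr ∧
        Submodule.span ℝ ({xr, xi} : Set V) = W) ∧
    -- (c) W_x = W_y iff [y] = [x] or [y] = [x̄] in ℙ(V_ℂ)
    (∀ xr xi yr yi : V,
      b xr xr = b xi xi → b xr xi = 0 → 0 < b xr xr →
      b yr yr = b yi yi → b yr yi = 0 → 0 < b yr yr →
      (Submodule.span ℝ ({xr, xi} : Set V) = Submodule.span ℝ ({yr, yi} : Set V) ↔
        ∃ s t : ℝ, ¬(s = 0 ∧ t = 0) ∧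
          ((yr = s • xr - t • xi ∧ yi = s • xi + t • xr) ∨
           (yr = s • xr + t • xi ∧ yi = t • xr - s • xi)))) :=
  stmt2_general b hsymm
end

section
/- Let V be a finite-dimensional real vector space with a nondegenerate symmetric bilinear form of signature (3, n) (maximal positive-definite subspaces have dimension 3), and let V ⊕ ℝw ⊕ ℝw* carry the hyperbolic extension of the form (V ⊥ (ℝw ⊕ ℝw*), w² = w*² = 0, ⟨w,w*⟩ = 1). For a 3-dimensional positive-definite subspace F ⊂ V, a real number α > 0 and B ∈ V, set F' = {f − ⟨f,B⟩w : f ∈ F} and B' = B + ((α − B²)/2)w + w*. Then the map φ(F, α, B) = ℝB' ⊕ F' is a bijection from the set {(F, α, B) : F ⊂ V a 3-dimensional positive-definite subspace, α ∈ ℝ_{>0}, B ∈ V} onto the set of 4-dimensional subspaces Π ⊂ V ⊕ ℝw ⊕ ℝw* on which the form is positive definite. -/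
/-- The hyperbolic extension form on `V × ℝ × ℝ`, where `(x, a, c)` represents
`x + a•w + c•w*`:  `V ⊥ (ℝw ⊕ ℝw*)`, `w² = w*² = 0`, `⟨w,w*⟩ = 1`. -/
noncomputable def hypPairing {V : Type*} [AddCommGroup V] [Module ℝ V]
    (b : LinearMap.BilinForm ℝ V) (p q : V × ℝ × ℝ) : ℝ :=
  b p.1 q.1 + p.2.1 * q.2.2 + p.2.2 * q.2.1

/-- The linear embedding `f ↦ f − ⟨f,B⟩w`, i.e. `f ↦ (f, −⟨f,B⟩, 0)`. -/
noncomputable def embMap {V : Type*} [AddCommGroup V] [Module ℝ V]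
    (b : LinearMap.BilinForm ℝ V) (B : V) : V →ₗ[ℝ] V × ℝ × ℝ :=
  LinearMap.prod LinearMap.id (LinearMap.prod (-(b.flip B)) 0)

/-- `φ(F, α, B) = ℝB' ⊕ F'` where `F' = {f − ⟨f,B⟩w : f ∈ F}` and
`B' = B + ((α − B²)/2)w + w*`. -/
noncomputable def phiSpace {V : Type*} [AddCommGroup V] [Module ℝ V]
    (b : LinearMap.BilinForm ℝ V) (F : Submodule ℝ V) (α : ℝ) (B : V) :
    Submodule ℝ (V × ℝ × ℝ) :=
  Submodule.span ℝ {(B, (α - b B B) / 2, 1)} ⊔ F.map (embMap b B)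

/-! In the coordinates `t B' + f'` the form on `φ(F, α, B)` is `f² + α t²`, so `φ(F, α, B)` is
positive definite, and its vectors with vanishing `w*`-coefficient are exactly `F'`. These recover
`F` and `⟨·, B⟩` on `F`. If `φ(F, α₁, B₁) = φ(F, α₂, B₂)`, then `B₂' - B₁'` has vanishing
`w*`-coefficient, so `B₂ = B₁ + f` with `f ∈ F` and `⟨f, B₁⟩ = ⟨f, B₂⟩`, whence `f² = 0`.

Conversely, let `Π` be positive definite of dimension `k + 1`, where `k` bounds the dimension of
the positive-definite subspaces of `V`. Some vector of `Π` has nonzero `w*`-coefficient, since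
otherwise the projection to `V` would map `Π` injectively onto a positive-definite subspace. So the
vectors of `Π` with vanishing `w*`-coefficient form a hyperplane `Π₀`, and a vector of `Π`
orthogonal to `Π₀` can be normalised to `B + a w + w*`. Orthogonality to it forces
`Π₀ = F'` for `F` the projection of `Π₀` to `V`, and `Π = φ(F, α, B)` with `α = B² + 2a > 0`. -/

open Module

section

variable {V : Type*} [AddCommGroup V] [Module ℝ V] (b : LinearMap.BilinForm ℝ V)

noncomputable def hypForm : LinearMap.BilinForm ℝ (V × ℝ × ℝ) :=
  LinearMap.mk₂ ℝ (hypPairing b)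
    (fun _ _ _ => by simp only [hypPairing, Prod.fst_add, Prod.snd_add, map_add,
      LinearMap.add_apply]; ring)
    (fun _ _ _ => by simp only [hypPairing, Prod.smul_fst, Prod.smul_snd, map_smul,
      LinearMap.smul_apply, smul_eq_mul]; ring)
    (fun _ _ _ => by simp only [hypPairing, Prod.fst_add, Prod.snd_add, map_add]; ring)
    (fun c p q => by
      simp only [hypPairing, Prod.smul_fst, Prod.smul_snd, map_smul, smul_eq_mul]
      ring)

@[simp]
lemma hypForm_apply (p q : V × ℝ × ℝ) : hypForm b p q = hypPairing b p q := rfl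

variable (V) in
def wStarCoeff : V × ℝ × ℝ →ₗ[ℝ] ℝ := LinearMap.snd ℝ ℝ ℝ ∘ₗ LinearMap.snd ℝ V (ℝ × ℝ)

@[simp]
lemma wStarCoeff_apply (p : V × ℝ × ℝ) : wStarCoeff V p = p.2.2 := rfl

lemma hypPairing_self_of_snd_snd_eq_zero {p : V × ℝ × ℝ} (hp : p.2.2 = 0) :
    hypPairing b p p = b p.1 p.1 := by
  simp [hypPairing, hp]

@[simp]
lemma embMap_apply (B f : V) : embMap b B f = (f, -b f B, 0) := rfl

lemma embMap_injective (B : V) : Function.Injective (embMap b B) :=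
  fun _ _ h => congrArg Prod.fst h

end

section phiSpace

variable {V : Type*} [AddCommGroup V] [Module ℝ V] {b : LinearMap.BilinForm ℝ V}
  {F : Submodule ℝ V} {α : ℝ} {B : V}

lemma mem_phiSpace_iff {p : V × ℝ × ℝ} :
    p ∈ phiSpace b F α B ↔
      ∃ t : ℝ, ∃ f ∈ F, p = (t • B + f, t * ((α - b B B) / 2) - b f B, t) := by
  simp only [phiSpace, Submodule.mem_sup, Submodule.mem_span_singleton, Submodule.mem_map]
  constructor
  · rintro ⟨_, ⟨t, rfl⟩, _, ⟨f, hf, rfl⟩, rfl⟩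
    exact ⟨t, f, hf, by simp [sub_eq_add_neg]⟩
  · rintro ⟨t, f, hf, rfl⟩
    exact ⟨_, ⟨t, rfl⟩, _, ⟨f, hf, rfl⟩, by simp [sub_eq_add_neg]⟩

lemma exists_eq_embMap_of_mem_phiSpace {p : V × ℝ × ℝ} (hp : p ∈ phiSpace b F α B)
    (hp0 : p.2.2 = 0) : ∃ f ∈ F, p = embMap b B f := by
  obtain ⟨t, f, hf, rfl⟩ := mem_phiSpace_iff.mp hp
  obtain rfl : t = 0 := hp0
  exact ⟨f, hf, by simp⟩

lemma hypPairing_phiSpace (hsymm : ∀ x y, b x y = b y x) (t : ℝ) (f : V) :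
    hypPairing b (t • B + f, t * ((α - b B B) / 2) - b f B, t)
      (t • B + f, t * ((α - b B B) / 2) - b f B, t) = b f f + α * t ^ 2 := by
  simp only [hypPairing, map_add, map_smul, LinearMap.add_apply, LinearMap.smul_apply,
    smul_eq_mul, hsymm B f]
  ring

lemma phiSpace_posDef (hsymm : ∀ x y, b x y = b y x) (hF : ∀ x ∈ F, x ≠ 0 → 0 < b x x)
    (hα : 0 < α) : ∀ p ∈ phiSpace b F α B, p ≠ 0 → 0 < hypPairing b p p := by
  intro p hp hp0
  obtain ⟨t, f, hf, rfl⟩ := mem_phiSpace_iff.mp hp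
  rw [hypPairing_phiSpace hsymm]
  have hff : 0 ≤ b f f := by
    rcases eq_or_ne f 0 with rfl | hf0
    · simp
    · exact (hF f hf hf0).le
  rcases eq_or_ne t 0 with rfl | ht
  · have hf0 : f ≠ 0 := by rintro rfl; simp at hp0
    simpa using hF f hf hf0
  · positivity

lemma finrank_phiSpace [FiniteDimensional ℝ F] :
    finrank ℝ (phiSpace b F α B) = finrank ℝ F + 1 := by
  have hdisj : Disjoint (Submodule.span ℝ {((B, (α - b B B) / 2, 1) : V × ℝ × ℝ)})
      (F.map (embMap b B)) := by
    rw [Submodule.disjoint_def]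
    rintro _ hx ⟨f, -, rfl⟩
    obtain ⟨c, hc⟩ := Submodule.mem_span_singleton.mp hx
    obtain rfl : c = 0 := by simpa using congrArg (·.2.2) hc
    simpa using hc.symm
  have := Submodule.finrank_sup_add_finrank_inf_eq
    (Submodule.span ℝ {((B, (α - b B B) / 2, 1) : V × ℝ × ℝ)}) (F.map (embMap b B))
  rw [hdisj.eq_bot, finrank_bot, finrank_span_singleton (by simp),
    ← (Submodule.equivMapOfInjective _ (embMap_injective b B) F).finrank_eq] at this
  rw [phiSpace]
  lia

lemma mem_and_apply_eq_of_phiSpace_eq {F₂ : Submodule ℝ V} {α₂ : ℝ} {B₂ : V}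
    (h : phiSpace b F α B = phiSpace b F₂ α₂ B₂) {f : V} (hf : f ∈ F) :
    f ∈ F₂ ∧ b f B = b f B₂ := by
  have hmem : embMap b B f ∈ phiSpace b F₂ α₂ B₂ := h ▸ Submodule.mem_sup_right ⟨f, hf, rfl⟩
  obtain ⟨g, hg, hfg⟩ := exists_eq_embMap_of_mem_phiSpace hmem rfl
  obtain rfl : f = g := congrArg Prod.fst hfg
  exact ⟨hg, by simpa using congrArg (·.2.1) hfg⟩

lemma phiSpace_injective (hF : ∀ x ∈ F, x ≠ 0 → 0 < b x x) {F₂ : Submodule ℝ V} {α₂ : ℝ}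
    {B₂ : V} (h : phiSpace b F α B = phiSpace b F₂ α₂ B₂) : F = F₂ ∧ α = α₂ ∧ B = B₂ := by
  have hF₂ : F = F₂ := le_antisymm (fun f hf => (mem_and_apply_eq_of_phiSpace_eq h hf).1)
    (fun f hf => (mem_and_apply_eq_of_phiSpace_eq h.symm hf).1)
  have hmem : ((B₂, (α₂ - b B₂ B₂) / 2, 1) : V × ℝ × ℝ) - (B, (α - b B B) / 2, 1) ∈
      phiSpace b F α B :=
    Submodule.sub_mem _ (h ▸ Submodule.mem_sup_left (Submodule.mem_span_singleton_self _))
      (Submodule.mem_sup_left (Submodule.mem_span_singleton_self _))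
  obtain ⟨f, hf, hff⟩ := exists_eq_embMap_of_mem_phiSpace hmem (by simp)
  simp only [Prod.mk_sub_mk, embMap_apply, Prod.mk.injEq, sub_self, and_true] at hff
  obtain ⟨hB, hα⟩ := hff
  obtain rfl : B₂ = B + f := sub_eq_iff_eq_add'.mp hB
  have hf0 : f = 0 := by
    by_contra hf0
    have := (mem_and_apply_eq_of_phiSpace_eq h hf).2
    simp only [map_add, left_eq_add] at this
    exact (hF f hf hf0).ne' this
  subst hf0
  refine ⟨hF₂, ?_, by simp⟩
  simp only [add_zero, map_zero, LinearMap.zero_apply, neg_zero] at hα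
  linarith

end phiSpace

lemma LinearMap.BilinForm.exists_ne_zero_forall_apply_eq_zero {K M : Type*} [Field K]
    [AddCommGroup M] [Module K M] (β : LinearMap.BilinForm K M) {W U : Submodule K M}
    [FiniteDimensional K W] [FiniteDimensional K U] (h : finrank K W < finrank K U) :
    ∃ q ∈ U, q ≠ 0 ∧ ∀ x ∈ W, β x q = 0 := by
  let L : U →ₗ[K] Module.Dual K W := (β.compl₁₂ W.subtype U.subtype).flip
  have hker : LinearMap.ker L ≠ ⊥ :=
    LinearMap.ker_ne_bot_of_finrank_lt (by rwa [Subspace.dual_finrank_eq])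
  obtain ⟨q, hq, hq0⟩ := Submodule.exists_mem_ne_zero_of_ne_bot hker
  exact ⟨q, q.2, by simpa using hq0, fun x hx => by simpa [L] using LinearMap.congr_fun hq ⟨x, hx⟩⟩

section surjective

variable {V : Type*} [AddCommGroup V] [Module ℝ V]
  {b : LinearMap.BilinForm ℝ V} {k : ℕ} {P : Submodule ℝ (V × ℝ × ℝ)}

lemma exists_mem_snd_snd_ne_zero
    (hmax : ∀ F : Submodule ℝ V, (∀ x ∈ F, x ≠ 0 → 0 < b x x) → finrank ℝ F ≤ k)
    (hk : k < finrank ℝ P) (hpos : ∀ p ∈ P, p ≠ 0 → 0 < hypPairing b p p) :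
    ∃ p ∈ P, p.2.2 ≠ 0 := by
  by_contra! h
  have hdisj : Disjoint P (LinearMap.ker (LinearMap.fst ℝ V (ℝ × ℝ))) := by
    rw [Submodule.disjoint_def]
    intro p hp hp1
    by_contra hp0
    have := hpos p hp hp0
    rw [hypPairing_self_of_snd_snd_eq_zero b (h p hp), show p.1 = 0 from hp1] at this
    simp at this
  have hrank : finrank ℝ (P.map (LinearMap.fst ℝ V (ℝ × ℝ))) = finrank ℝ P := by
    rw [← LinearMap.range_domRestrict,
      LinearMap.finrank_range_of_inj (LinearMap.injective_domRestrict_iff.mpr hdisj)]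
  have := hmax (P.map (LinearMap.fst ℝ V (ℝ × ℝ))) <| by
    rintro _ ⟨p, hp, rfl⟩ hx
    have hp0 : p ≠ 0 := by rintro rfl; exact hx rfl
    simpa [hypPairing_self_of_snd_snd_eq_zero b (h p hp)] using hpos p hp hp0
  lia

lemma exists_mem_snd_snd_eq_one_forall_hypPairing_eq_zero [FiniteDimensional ℝ V]
    (hmax : ∀ F : Submodule ℝ V, (∀ x ∈ F, x ≠ 0 → 0 < b x x) → finrank ℝ F ≤ k)
    (hk : k < finrank ℝ P) (hpos : ∀ p ∈ P, p ≠ 0 → 0 < hypPairing b p p) :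
    ∃ q ∈ P, q.2.2 = 1 ∧ ∀ x ∈ P ⊓ LinearMap.ker (wStarCoeff V), hypPairing b x q = 0 := by
  obtain ⟨p, hp, hp0⟩ := exists_mem_snd_snd_ne_zero hmax hk hpos
  have hlt : P ⊓ LinearMap.ker (wStarCoeff V) < P := inf_lt_left.mpr fun hle => hp0 (hle hp)
  obtain ⟨q, hq, hq0, horth⟩ :=
    (hypForm b).exists_ne_zero_forall_apply_eq_zero (Submodule.finrank_lt_finrank_of_lt hlt)
  have hq2 : q.2.2 ≠ 0 := fun h0 => (hpos q hq hq0).ne' (by simpa using horth q ⟨hq, h0⟩)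
  refine ⟨(q.2.2)⁻¹ • q, P.smul_mem _ hq, by simp [hq2], fun x hx => ?_⟩
  rw [← hypForm_apply, map_smul, horth x hx, smul_zero]

lemma phiSpace_eq_of_forall_hypPairing_eq_zero {q : V × ℝ × ℝ} (hq : q ∈ P) (hq1 : q.2.2 = 1)
    (horth : ∀ x ∈ P ⊓ LinearMap.ker (wStarCoeff V), hypPairing b x q = 0) :
    phiSpace b ((P ⊓ LinearMap.ker (wStarCoeff V)).map (LinearMap.fst ℝ V (ℝ × ℝ)))
      (hypPairing b q q) q.1 = P := by
  set P₀ := P ⊓ LinearMap.ker (wStarCoeff V)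
  have hP₀ : ∀ p ∈ P₀, embMap b q.1 p.1 = p := by
    intro p hp
    have h0 : p.2.2 = 0 := hp.2
    have := horth p hp
    simp only [hypPairing, hq1, h0, mul_one, zero_mul, add_zero] at this
    ext <;> simp [h0]
    linarith
  have hgen : ((q.1, (hypPairing b q q - b q.1 q.1) / 2, 1) : V × ℝ × ℝ) = q := by
    ext <;> simp [hypPairing, hq1]
    ring
  have hmap : (P₀.map (LinearMap.fst ℝ V (ℝ × ℝ))).map (embMap b q.1) = P₀ := by
    ext p
    constructor
    · rintro ⟨_, ⟨p', hp', rfl⟩, rfl⟩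
      simpa [hP₀ p' hp'] using hp'
    · exact fun hp => ⟨p.1, ⟨p, hp, rfl⟩, hP₀ p hp⟩
  rw [phiSpace, hgen, hmap]
  refine le_antisymm (sup_le ((Submodule.span_singleton_le_iff_mem _ _).mpr hq) inf_le_left)
    fun p hp => Submodule.mem_sup.mpr ?_
  exact ⟨p.2.2 • q, Submodule.mem_span_singleton.mpr ⟨_, rfl⟩, p - p.2.2 • q,
    ⟨P.sub_mem hp (P.smul_mem _ hq), by simp [hq1]⟩, by abel⟩

lemma exists_phiSpace_eq [FiniteDimensional ℝ V]
    (hmax : ∀ F : Submodule ℝ V, (∀ x ∈ F, x ≠ 0 → 0 < b x x) → finrank ℝ F ≤ k)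
    (hP : finrank ℝ P = k + 1) (hpos : ∀ p ∈ P, p ≠ 0 → 0 < hypPairing b p p) :
    ∃ (F : Submodule ℝ V) (α : ℝ) (B : V), finrank ℝ F = k ∧
      (∀ x ∈ F, x ≠ 0 → 0 < b x x) ∧ 0 < α ∧ phiSpace b F α B = P := by
  obtain ⟨q, hq, hq1, horth⟩ :=
    exists_mem_snd_snd_eq_one_forall_hypPairing_eq_zero hmax (by lia) hpos
  have hφ := phiSpace_eq_of_forall_hypPairing_eq_zero hq hq1 horth
  refine ⟨_, _, _, ?_, ?_, hpos q hq (by rintro rfl; simp at hq1), hφ⟩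
  · have := finrank_phiSpace (b := b) (α := hypPairing b q q) (B := q.1)
      (F := (P ⊓ LinearMap.ker (wStarCoeff V)).map (LinearMap.fst ℝ V (ℝ × ℝ)))
    rw [hφ, hP] at this
    lia
  · rintro _ ⟨p, hp, rfl⟩ hx
    have hp0 : p ≠ 0 := by rintro rfl; exact hx rfl
    simpa [hypPairing_self_of_snd_snd_eq_zero b hp.2] using hpos p hp.1 hp0

end surjective

theorem stmt3_general {V : Type*} [AddCommGroup V] [Module ℝ V] [FiniteDimensional ℝ V]
    (b : LinearMap.BilinForm ℝ V)
    (hsymm : ∀ x y, b x y = b y x)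
    (hmax : ∀ F : Submodule ℝ V, (∀ x ∈ F, x ≠ 0 → 0 < b x x) → Module.finrank ℝ F ≤ 3) :
    -- φ is well defined: its values are 4-dimensional positive-definite subspaces
    (∀ (F : Submodule ℝ V) (α : ℝ) (B : V),
      Module.finrank ℝ F = 3 → (∀ x ∈ F, x ≠ 0 → 0 < b x x) → 0 < α →
      Module.finrank ℝ (phiSpace b F α B) = 4 ∧
        ∀ p ∈ phiSpace b F α B, p ≠ 0 → 0 < hypPairing b p p) ∧
    -- φ is injective
    (∀ (F₁ F₂ : Submodule ℝ V) (α₁ α₂ : ℝ) (B₁ B₂ : V),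
      Module.finrank ℝ F₁ = 3 → (∀ x ∈ F₁, x ≠ 0 → 0 < b x x) → 0 < α₁ →
      Module.finrank ℝ F₂ = 3 → (∀ x ∈ F₂, x ≠ 0 → 0 < b x x) → 0 < α₂ →
      phiSpace b F₁ α₁ B₁ = phiSpace b F₂ α₂ B₂ →
      F₁ = F₂ ∧ α₁ = α₂ ∧ B₁ = B₂) ∧
    -- φ is surjective
    (∀ Pl : Submodule ℝ (V × ℝ × ℝ),
      Module.finrank ℝ Pl = 4 → (∀ p ∈ Pl, p ≠ 0 → 0 < hypPairing b p p) →
      ∃ (F : Submodule ℝ V) (α : ℝ) (B : V),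
        Module.finrank ℝ F = 3 ∧ (∀ x ∈ F, x ≠ 0 → 0 < b x x) ∧ 0 < α ∧
        phiSpace b F α B = Pl) := by
  refine ⟨fun F α B hF3 hF hα => ⟨?_, phiSpace_posDef hsymm hF hα⟩,
    fun F₁ F₂ α₁ α₂ B₁ B₂ _ hF₁ _ _ _ _ h => phiSpace_injective hF₁ h,
    fun P hP hpos => exists_phiSpace_eq hmax hP hpos⟩
  rw [finrank_phiSpace, hF3]

/-- `φ` is a bijection from the set of triples `(F, α, B)` (with `F ⊂ V` a 3-dimensional
positive-definite subspace, `α > 0`, `B ∈ V`) onto the set of 4-dimensional positive-definite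
subspaces of `V ⊕ ℝw ⊕ ℝw*`. -/
theorem stmt3 {V : Type*} [AddCommGroup V] [Module ℝ V] [FiniteDimensional ℝ V]
    (b : LinearMap.BilinForm ℝ V)
    (hsymm : ∀ x y, b x y = b y x)
    (hnd : ∀ x : V, (∀ y, b x y = 0) → x = 0)
    (hsig : ∃ F : Submodule ℝ V, Module.finrank ℝ F = 3 ∧ ∀ x ∈ F, x ≠ 0 → 0 < b x x)
    (hmax : ∀ F : Submodule ℝ V, (∀ x ∈ F, x ≠ 0 → 0 < b x x) → Module.finrank ℝ F ≤ 3) :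
    -- φ is well defined: its values are 4-dimensional positive-definite subspaces
    (∀ (F : Submodule ℝ V) (α : ℝ) (B : V),
      Module.finrank ℝ F = 3 → (∀ x ∈ F, x ≠ 0 → 0 < b x x) → 0 < α →
      Module.finrank ℝ (phiSpace b F α B) = 4 ∧
        ∀ p ∈ phiSpace b F α B, p ≠ 0 → 0 < hypPairing b p p) ∧
    -- φ is injective
    (∀ (F₁ F₂ : Submodule ℝ V) (α₁ α₂ : ℝ) (B₁ B₂ : V),
      Module.finrank ℝ F₁ = 3 → (∀ x ∈ F₁, x ≠ 0 → 0 < b x x) → 0 < α₁ →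
      Module.finrank ℝ F₂ = 3 → (∀ x ∈ F₂, x ≠ 0 → 0 < b x x) → 0 < α₂ →
      phiSpace b F₁ α₁ B₁ = phiSpace b F₂ α₂ B₂ →
      F₁ = F₂ ∧ α₁ = α₂ ∧ B₁ = B₂) ∧
    -- φ is surjective
    (∀ Pl : Submodule ℝ (V × ℝ × ℝ),
      Module.finrank ℝ Pl = 4 → (∀ p ∈ Pl, p ≠ 0 → 0 < hypPairing b p p) →
      ∃ (F : Submodule ℝ V) (α : ℝ) (B : V),
        Module.finrank ℝ F = 3 ∧ (∀ x ∈ F, x ≠ 0 → 0 < b x x) ∧ 0 < α ∧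
        phiSpace b F α B = Pl) :=
  stmt3_general b hsymm hmax
end

section
/- Let V be a finite-dimensional real vector space with a nondegenerate symmetric bilinear form of signature (3, b−3) with b = dim V > 3. Then the period domain Q = {[x] ∈ ℙ(V_ℂ) : ⟨x,x⟩ = 0 and ⟨x + x̄, x + x̄⟩ > 0} is a connected topological space. -/
open Matrix
open scoped LinearAlgebra.Projectivization

/-- The quotient topology on a projectivization. -/
noncomputable instance projTopology {K V : Type*} [DivisionRing K] [AddCommGroup V]
    [Module K V] [TopologicalSpace V] : TopologicalSpace (ℙ K V) :=
  inferInstanceAs (TopologicalSpace (Quotient (projectivizationSetoid K V)))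

/-- The real bilinear form with Gram matrix `G` on `ℝ^b`. -/
noncomputable def formR {b : ℕ} (G : Matrix (Fin b) (Fin b) ℝ) (x y : Fin b → ℝ) : ℝ :=
  x ⬝ᵥ (G *ᵥ y)

/-- The ℂ-bilinear extension of the form to `V_ℂ = ℂ^b`. -/
noncomputable def formC {b : ℕ} (G : Matrix (Fin b) (Fin b) ℝ) (x y : Fin b → ℂ) : ℂ :=
  x ⬝ᵥ ((G.map Complex.ofReal) *ᵥ y)

/-- The period domain `Q = {[x] ∈ ℙ(V_ℂ) : ⟨x,x⟩ = 0, ⟨x + x̄, x + x̄⟩ > 0}`. -/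
def periodDomain {b : ℕ} (G : Matrix (Fin b) (Fin b) ℝ) : Set (ℙ ℂ (Fin b → ℂ)) :=
  {p | ∃ (z : Fin b → ℂ) (hz : z ≠ 0), p = Projectivization.mk ℂ z hz ∧
    formC G z z = 0 ∧ 0 < (formC G (z + star z) (z + star z)).re}

/-!
Writing `z = u + i v`, the conditions defining `Q` say that `u, v` are orthogonal of equal
positive square, so `Q` is a continuous image of the set of such pairs, which Gram–Schmidt
in turn exhibits as a continuous image of the set of pairs spanning a positive definite plane.
Let `F` be a maximal positive definite subspace; the form is then negative semidefinite on
`F^⊥`, so shrinking the `F^⊥`-components of a positive pair linearly to zero keeps it positive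
and deforms it into `F × F`. Inside `F`, of dimension `≥ 3`, shear a positive pair into an
orthogonal one, then move one vector at a time in the punctured orthogonal complement of the
other, which has dimension `≥ 2` and so is path connected: `(a, c) → (g, c) → (g, c') → (a', c')`
with `g` a common perpendicular of `c` and `c'`.
-/

theorem sq_mul_add_sq_mul_pos {α β a c : ℝ} (hαβ : (α, β) ≠ 0) (ha : 0 < a) (hc : 0 < c) :
    0 < α ^ 2 * a + β ^ 2 * c := by
  rcases not_and_or.mp (mt Prod.ext_iff.mpr hαβ) with h | h
  · nlinarith [sq_pos_of_ne_zero h, sq_nonneg β]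
  · nlinarith [sq_pos_of_ne_zero h, sq_nonneg α]

namespace LinearMap.BilinForm

variable {E : Type*} [AddCommGroup E] [Module ℝ E] {B : LinearMap.BilinForm ℝ E}
  {F : Submodule ℝ E}

variable (B) in
def orthoPairs : Set (E × E) :=
  {p | B p.1 p.1 = B p.2 p.2 ∧ B p.1 p.2 = 0 ∧ 0 < B p.1 p.1}

variable (B) in
def posDefPairs : Set (E × E) :=
  {p | ∀ α β : ℝ, (α, β) ≠ 0 → 0 < B (α • p.1 + β • p.2) (α • p.1 + β • p.2)}

variable (B) in
noncomputable def gramSchmidtPair (p : E × E) : E × E :=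
  let w := p.2 - (B p.1 p.2 / B p.1 p.1) • p.1
  (p.1, √(B p.1 p.1 / B w w) • w)

theorem apply_smul_add_smul_self (hB : B.IsSymm) (α β : ℝ) (u v : E) :
    B (α • u + β • v) (α • u + β • v) = α ^ 2 * B u u + 2 * α * β * B u v + β ^ 2 * B v v := by
  simp only [map_add, map_smul, LinearMap.add_apply, LinearMap.smul_apply, smul_eq_mul,
    hB.eq v u]
  ring

theorem pos_fst_of_mem_posDefPairs {p : E × E} (hp : p ∈ B.posDefPairs) : 0 < B p.1 p.1 := by
  simpa using hp 1 0 (by simp)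

theorem pos_snd_of_mem_posDefPairs {p : E × E} (hp : p ∈ B.posDefPairs) : 0 < B p.2 p.2 := by
  simpa using hp 0 1 (by simp)

theorem fst_ne_zero_of_mem_orthoPairs {p : E × E} (hp : p ∈ B.orthoPairs) : p.1 ≠ 0 :=
  fun h => by simpa [h] using hp.2.2

theorem orthoPairs_subset_posDefPairs (hB : B.IsSymm) : B.orthoPairs ⊆ B.posDefPairs := by
  rintro ⟨u, v⟩ ⟨huv, horth, hu⟩ α β hαβ
  rw [apply_smul_add_smul_self hB, ← huv, horth, mul_zero, add_zero]
  exact sq_mul_add_sq_mul_pos hαβ hu hu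

theorem sub_smul_mem_posDefPairs {p : E × E} (hp : p ∈ B.posDefPairs) (t : ℝ) :
    (p.1, p.2 - t • p.1) ∈ B.posDefPairs := by
  intro α β hαβ
  have h := hp (α - β * t) β (by
    contrapose! hαβ
    obtain ⟨h, rfl⟩ := Prod.ext_iff.mp hαβ
    simpa using h)
  have : α • p.1 + β • (p.2 - t • p.1) = (α - β * t) • p.1 + β • p.2 := by module
  simpa only [this] using h

theorem pos_sub_smul_of_mem_posDefPairs {p : E × E} (hp : p ∈ B.posDefPairs) (t : ℝ) :
    0 < B (p.2 - t • p.1) (p.2 - t • p.1) :=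
  pos_snd_of_mem_posDefPairs (sub_smul_mem_posDefPairs hp t)

theorem gramSchmidtPair_mem_orthoPairs {p : E × E} (hp : p ∈ B.posDefPairs) :
    B.gramSchmidtPair p ∈ B.orthoPairs := by
  obtain ⟨u, v⟩ := p
  have hu := pos_fst_of_mem_posDefPairs hp
  set w := v - (B u v / B u u) • u with hw
  have hwpos : 0 < B w w := pos_sub_smul_of_mem_posDefPairs hp _
  have huw : B u w = 0 := by
    simp only [hw, map_sub, map_smul, smul_eq_mul]
    field_simp; ring
  refine ⟨?_, ?_, hu⟩
  · simp only [gramSchmidtPair, ← hw, map_smul, LinearMap.smul_apply, smul_eq_mul]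
    rw [← mul_assoc, Real.mul_self_sqrt (by positivity), div_mul_cancel₀ _ hwpos.ne']
  · simp [gramSchmidtPair, ← hw, huw]

theorem gramSchmidtPair_eq_self {p : E × E} (hp : p ∈ B.orthoPairs) : B.gramSchmidtPair p = p := by
  obtain ⟨u, v⟩ := p
  obtain ⟨huv, horth, hu⟩ := hp
  simp [gramSchmidtPair, horth, huv, div_self (huv ▸ hu).ne']

theorem image_gramSchmidtPair_posDefPairs (hB : B.IsSymm) :
    B.gramSchmidtPair '' B.posDefPairs = B.orthoPairs := by
  refine subset_antisymm (Set.image_subset_iff.mpr fun p hp => gramSchmidtPair_mem_orthoPairs hp)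
    fun p hp => ⟨p, orthoPairs_subset_posDefPairs hB hp, gramSchmidtPair_eq_self hp⟩

theorem apply_add_smul_self_of_mem_orthogonal (hB : B.IsSymm) {f x : E} (hf : f ∈ F)
    (hx : x ∈ B.orthogonal F) (s : ℝ) :
    B (f + s • x) (f + s • x) = B f f + s ^ 2 * B x x := by
  have hfx : B f x = 0 := mem_orthogonal_iff.mp hx f hf
  simp only [map_add, map_smul, LinearMap.add_apply, LinearMap.smul_apply, smul_eq_mul, hfx,
    hB.eq x f]
  ring

theorem mem_posDefPairs_of_apply_eq_zero (hB : B.IsSymm) (hF : ∀ x ∈ F, x ≠ 0 → 0 < B x x)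
    {u v : E} (hu : u ∈ F) (hv : v ∈ F) (hu0 : u ≠ 0) (hv0 : v ≠ 0) (huv : B u v = 0) :
    (u, v) ∈ B.posDefPairs := by
  intro α β hαβ
  rw [apply_smul_add_smul_self hB, huv, mul_zero, add_zero]
  exact sq_mul_add_sq_mul_pos hαβ (hF u hu hu0) (hF v hv hv0)

theorem exists_ne_zero_mem_apply_eq_zero (h3 : 3 ≤ Module.finrank ℝ F) (w w' : E) :
    ∃ g ∈ F, g ≠ 0 ∧ B w g = 0 ∧ B w' g = 0 := by
  have : FiniteDimensional ℝ F := Module.finite_of_finrank_pos (by omega)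
  let f := ((B w).domRestrict F).prod ((B w').domRestrict F)
  have hker : LinearMap.ker f ≠ ⊥ :=
    LinearMap.ker_ne_bot_of_finrank_lt (by rw [Module.finrank_prod, Module.finrank_self]; omega)
  obtain ⟨⟨g, hgF⟩, hg, hg0⟩ := Submodule.exists_mem_ne_zero_of_ne_bot hker
  exact ⟨g, hgF, by simpa using hg0, by simpa [f, Prod.ext_iff] using hg⟩

theorem apply_self_nonpos_of_mem_orthogonal [FiniteDimensional ℝ E] (hB : B.IsSymm)
    (hF : ∀ x ∈ F, x ≠ 0 → 0 < B x x)
    (hmax : ∀ F' : Submodule ℝ E, (∀ x ∈ F', x ≠ 0 → 0 < B x x) →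
      Module.finrank ℝ F' ≤ Module.finrank ℝ F)
    {x : E} (hx : x ∈ B.orthogonal F) : B x x ≤ 0 := by
  by_contra! hxx
  have hxF : x ∉ F := fun hxF => hxx.ne' (mem_orthogonal_iff.mp hx x hxF)
  have hpos : ∀ y ∈ F ⊔ Submodule.span ℝ {x}, y ≠ 0 → 0 < B y y := by
    intro y hy hy0
    obtain ⟨f, hf, _, hs, rfl⟩ := Submodule.mem_sup.mp hy
    obtain ⟨s, rfl⟩ := Submodule.mem_span_singleton.mp hs
    rw [apply_add_smul_self_of_mem_orthogonal hB hf hx]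
    rcases eq_or_ne f 0 with rfl | hf0
    · have hs0 : s ≠ 0 := by rintro rfl; simp at hy0
      simp only [map_zero, zero_add]
      exact mul_pos (sq_pos_of_ne_zero hs0) hxx
    · nlinarith [hF f hf hf0, mul_nonneg (sq_nonneg s) hxx.le]
  have := hmax _ hpos
  rw [Submodule.finrank_sup_span_singleton hxF] at this
  omega

variable (B) in
def puncturedOrthogonal (F : Submodule ℝ E) (w : E) : Set E := {v | v ∈ F ∧ B w v = 0 ∧ v ≠ 0}

section Topology

variable [TopologicalSpace E] [IsTopologicalAddGroup E] [ContinuousSMul ℝ E]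

theorem continuousOn_gramSchmidtPair (hBc : Continuous fun p : E × E => B p.1 p.2) :
    ContinuousOn B.gramSchmidtPair B.posDefPairs := by
  have hform {f g : E × E → E} (hf : ContinuousOn f B.posDefPairs)
      (hg : ContinuousOn g B.posDefPairs) :
      ContinuousOn (fun p => B (f p) (g p)) B.posDefPairs :=
    hBc.comp_continuousOn (hf.prodMk hg)
  have hw : ContinuousOn (fun p : E × E => p.2 - (B p.1 p.2 / B p.1 p.1) • p.1) B.posDefPairs :=
    continuousOn_snd.sub (((hform continuousOn_fst continuousOn_snd).div
      (hform continuousOn_fst continuousOn_fst)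
      fun p hp => (pos_fst_of_mem_posDefPairs hp).ne').smul continuousOn_fst)
  refine continuousOn_fst.prodMk (ContinuousOn.smul ?_ hw)
  exact ((hform continuousOn_fst continuousOn_fst).div (hform hw hw)
    fun p hp => (pos_sub_smul_of_mem_posDefPairs hp _).ne').sqrt

theorem joinedIn_posDefPairs_sub_smul {u v : E} (hp : (u, v) ∈ B.posDefPairs) (t : ℝ) :
    JoinedIn B.posDefPairs (u, v) (u, v - t • u) :=
  JoinedIn.ofLine (f := fun s : ℝ => (u, v - (s * t) • u)) (by fun_prop) (by simp) (by simp)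
    (Set.image_subset_iff.mpr fun s _ => sub_smul_mem_posDefPairs hp (s * t))

theorem joinedIn_posDefPairs_of_mem_orthogonal (hB : B.IsSymm)
    (hneg : ∀ x ∈ B.orthogonal F, B x x ≤ 0) {a c x y : E} (ha : a ∈ F) (hc : c ∈ F)
    (hx : x ∈ B.orthogonal F) (hy : y ∈ B.orthogonal F) (hp : (a + x, c + y) ∈ B.posDefPairs) :
    JoinedIn B.posDefPairs (a, c) (a + x, c + y) := by
  refine JoinedIn.ofLine (f := fun s : ℝ => (a + s • x, c + s • y)) (by fun_prop) (by simp)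
    (by simp) ?_
  rintro _ ⟨s, ⟨hs0, hs1⟩, rfl⟩ α β hαβ
  have hsplit (t : ℝ) :
      α • (a + t • x) + β • (c + t • y) = (α • a + β • c) + t • (α • x + β • y) := by
    module
  have hF : α • a + β • c ∈ F := add_mem (F.smul_mem α ha) (F.smul_mem β hc)
  have hperp : α • x + β • y ∈ B.orthogonal F :=
    add_mem (Submodule.smul_mem _ α hx) (Submodule.smul_mem _ β hy)
  have h1 := hp α β hαβ
  rw [← one_smul ℝ x, ← one_smul ℝ y, hsplit] at h1
  have hs : s ^ 2 ≤ 1 := by nlinarith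
  simp only [hsplit, apply_add_smul_self_of_mem_orthogonal hB hF hperp] at h1 ⊢
  nlinarith [hneg _ hperp]

theorem isPathConnected_puncturedOrthogonal (h3 : 3 ≤ Module.finrank ℝ F) (w : E) :
    IsPathConnected (B.puncturedOrthogonal F w) := by
  have : FiniteDimensional ℝ F := Module.finite_of_finrank_pos (by omega)
  let f := (B w).domRestrict F
  have hK : 1 < Module.rank ℝ (LinearMap.ker f) := by
    have hrange := (LinearMap.range f).finrank_le
    have := f.finrank_range_add_finrank_ker
    rw [Module.finrank_self] at hrange
    rw [← Module.finrank_eq_rank]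
    exact_mod_cast (by omega : 1 < Module.finrank ℝ (LinearMap.ker f))
  have himage : B.puncturedOrthogonal F w = (fun z : LinearMap.ker f => (z : E)) '' {0}ᶜ := by
    ext v
    constructor
    · rintro ⟨hvF, hwv, hv0⟩
      exact ⟨⟨⟨v, hvF⟩, by simpa [f] using hwv⟩, by simpa using hv0, rfl⟩
    · rintro ⟨⟨⟨v, hvF⟩, hv⟩, hv0, rfl⟩
      exact ⟨hvF, by simpa [f] using hv, by simpa using hv0⟩
  rw [himage]
  exact (isPathConnected_compl_singleton_of_one_lt_rank hK 0).image (by fun_prop)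

theorem joinedIn_posDefPairs_of_mem_puncturedOrthogonal_snd (hB : B.IsSymm)
    (hF : ∀ x ∈ F, x ≠ 0 → 0 < B x x) (h3 : 3 ≤ Module.finrank ℝ F) {w v v' : E} (hw : w ∈ F)
    (hw0 : w ≠ 0) (hv : v ∈ B.puncturedOrthogonal F w) (hv' : v' ∈ B.puncturedOrthogonal F w) :
    JoinedIn B.posDefPairs (w, v) (w, v') := by
  refine (((isPathConnected_puncturedOrthogonal h3 w).joinedIn v hv v' hv').map
    (f := fun z => (w, z)) (by fun_prop)).mono ?_
  rintro _ ⟨z, ⟨hzF, hwz, hz0⟩, rfl⟩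
  exact mem_posDefPairs_of_apply_eq_zero hB hF hw hzF hw0 hz0 hwz

theorem joinedIn_posDefPairs_of_mem_puncturedOrthogonal_fst (hB : B.IsSymm)
    (hF : ∀ x ∈ F, x ≠ 0 → 0 < B x x) (h3 : 3 ≤ Module.finrank ℝ F) {w v v' : E} (hw : w ∈ F)
    (hw0 : w ≠ 0) (hv : v ∈ B.puncturedOrthogonal F w) (hv' : v' ∈ B.puncturedOrthogonal F w) :
    JoinedIn B.posDefPairs (v, w) (v', w) := by
  refine (((isPathConnected_puncturedOrthogonal h3 w).joinedIn v hv v' hv').map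
    (f := fun z => (z, w)) (by fun_prop)).mono ?_
  rintro _ ⟨z, ⟨hzF, hwz, hz0⟩, rfl⟩
  exact mem_posDefPairs_of_apply_eq_zero hB hF hzF hw hz0 hw0 (hB.eq w z ▸ hwz)

theorem joinedIn_posDefPairs_of_apply_eq_zero (hB : B.IsSymm) (hF : ∀ x ∈ F, x ≠ 0 → 0 < B x x)
    (h3 : 3 ≤ Module.finrank ℝ F) {a c a' c' : E} (ha : a ∈ F) (hc : c ∈ F) (ha' : a' ∈ F)
    (hc' : c' ∈ F) (ha0 : a ≠ 0) (hc0 : c ≠ 0) (ha0' : a' ≠ 0) (hc0' : c' ≠ 0)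
    (hac : B a c = 0) (hac' : B a' c' = 0) :
    JoinedIn B.posDefPairs (a, c) (a', c') := by
  obtain ⟨g, hgF, hg0, hcg, hc'g⟩ := exists_ne_zero_mem_apply_eq_zero (B := B) h3 c c'
  have hsymm {v w : E} (h : B v w = 0) : B w v = 0 := hB.eq v w ▸ h
  exact ((joinedIn_posDefPairs_of_mem_puncturedOrthogonal_fst hB hF h3 hc hc0
      ⟨ha, hsymm hac, ha0⟩ ⟨hgF, hcg, hg0⟩).trans
    (joinedIn_posDefPairs_of_mem_puncturedOrthogonal_snd hB hF h3 hgF hg0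
      ⟨hc, hsymm hcg, hc0⟩ ⟨hc', hsymm hc'g, hc0'⟩)).trans
    (joinedIn_posDefPairs_of_mem_puncturedOrthogonal_fst hB hF h3 hc' hc0'
      ⟨hgF, hc'g, hg0⟩ ⟨ha', hsymm hac', ha0'⟩)

theorem joinedIn_posDefPairs_of_mem_submodule (hB : B.IsSymm) (hF : ∀ x ∈ F, x ≠ 0 → 0 < B x x)
    (h3 : 3 ≤ Module.finrank ℝ F) {a c a' c' : E} (ha : a ∈ F) (hc : c ∈ F) (ha' : a' ∈ F)
    (hc' : c' ∈ F) (hp : (a, c) ∈ B.posDefPairs) (hp' : (a', c') ∈ B.posDefPairs) :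
    JoinedIn B.posDefPairs (a, c) (a', c') := by
  have hortho {a c : E} (hp : (a, c) ∈ B.posDefPairs) : B a (c - (B a c / B a a) • a) = 0 := by
    have := (pos_fst_of_mem_posDefPairs hp).ne'
    simp only [map_sub, map_smul, smul_eq_mul]
    field_simp
    ring
  have hne {a c : E} (hp : (a, c) ∈ B.posDefPairs) (t : ℝ) : c - t • a ≠ 0 := fun h => by
    simpa [h] using pos_sub_smul_of_mem_posDefPairs hp t
  have hne' {a c : E} (hp : (a, c) ∈ B.posDefPairs) : a ≠ 0 := fun h => by
    simpa [h] using pos_fst_of_mem_posDefPairs hp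
  refine (joinedIn_posDefPairs_sub_smul hp _).trans
    (((joinedIn_posDefPairs_of_apply_eq_zero hB hF h3 ha (sub_mem hc (F.smul_mem _ ha)) ha'
      (sub_mem hc' (F.smul_mem _ ha')) (hne' hp) (hne hp _) (hne' hp') (hne hp' _) (hortho hp)
      (hortho hp')).trans (joinedIn_posDefPairs_sub_smul hp' _).symm))

variable [FiniteDimensional ℝ E]

theorem exists_joinedIn_posDefPairs_of_mem (hB : B.IsSymm) (hF : ∀ x ∈ F, x ≠ 0 → 0 < B x x)
    (hneg : ∀ x ∈ B.orthogonal F, B x x ≤ 0) {p : E × E} (hp : p ∈ B.posDefPairs) :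
    ∃ a ∈ F, ∃ c ∈ F, JoinedIn B.posDefPairs (a, c) p := by
  have hdisj : Disjoint F (B.orthogonal F) := Submodule.disjoint_def.mpr fun x hxF hx => by
    by_contra h
    exact (hF x hxF h).ne' (mem_orthogonal_iff.mp hx x hxF)
  have hsup := ((isCompl_orthogonal_iff_disjoint hB.isRefl).mpr hdisj).sup_eq_top
  obtain ⟨u, v⟩ := p
  obtain ⟨a, ha, x, hx, rfl⟩ := Submodule.mem_sup.mp (hsup ▸ Submodule.mem_top : u ∈ _)
  obtain ⟨c, hc, y, hy, rfl⟩ := Submodule.mem_sup.mp (hsup ▸ Submodule.mem_top : v ∈ _)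
  exact ⟨a, ha, c, hc, joinedIn_posDefPairs_of_mem_orthogonal hB hneg ha hc hx hy hp⟩

theorem isPathConnected_posDefPairs (hB : B.IsSymm) (hF : ∀ x ∈ F, x ≠ 0 → 0 < B x x)
    (h3 : 3 ≤ Module.finrank ℝ F) (hneg : ∀ x ∈ B.orthogonal F, B x x ≤ 0) :
    IsPathConnected B.posDefPairs := by
  refine isPathConnected_iff.mpr ⟨?_, fun p hp q hq => ?_⟩
  · obtain ⟨a, ha, ha0, -⟩ := exists_ne_zero_mem_apply_eq_zero (B := B) h3 0 0
    obtain ⟨c, hc, hc0, hac, -⟩ := exists_ne_zero_mem_apply_eq_zero (B := B) h3 a a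
    exact ⟨(a, c), mem_posDefPairs_of_apply_eq_zero hB hF ha hc ha0 hc0 hac⟩
  · obtain ⟨a, ha, c, hc, hjp⟩ := exists_joinedIn_posDefPairs_of_mem hB hF hneg hp
    obtain ⟨a', ha', c', hc', hjq⟩ := exists_joinedIn_posDefPairs_of_mem hB hF hneg hq
    exact hjp.symm.trans ((joinedIn_posDefPairs_of_mem_submodule hB hF h3 ha hc ha' hc'
      hjp.source_mem hjq.source_mem).trans hjq)

theorem isPathConnected_orthoPairs (hB : B.IsSymm) (hBc : Continuous fun p : E × E => B p.1 p.2)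
    (hF : ∀ x ∈ F, x ≠ 0 → 0 < B x x) (h3 : 3 ≤ Module.finrank ℝ F)
    (hneg : ∀ x ∈ B.orthogonal F, B x x ≤ 0) :
    IsPathConnected B.orthoPairs :=
  image_gramSchmidtPair_posDefPairs hB ▸
    (isPathConnected_posDefPairs hB hF h3 hneg).image' (continuousOn_gramSchmidtPair hBc)

end Topology

end LinearMap.BilinForm

section PeriodDomain

variable {n : Type*}

def complexify (p : (n → ℝ) × (n → ℝ)) : n → ℂ := fun i => ⟨p.1 i, p.2 i⟩

-- `Complex.equivRealProdCLM.symm (a, b)` unfolds to `⟨a, b⟩`.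
theorem continuous_complexify : Continuous (complexify : (n → ℝ) × (n → ℝ) → n → ℂ) :=
  continuous_pi fun i => (Complex.equivRealProdCLM.symm.continuous.comp
    (by fun_prop : Continuous fun p : (n → ℝ) × (n → ℝ) => (p.1 i, p.2 i)) :)

theorem complexify_ne_zero {p : (n → ℝ) × (n → ℝ)} (hp : p.1 ≠ 0) : complexify p ≠ 0 :=
  fun h => hp (funext fun i => by simpa [complexify] using congr_arg Complex.re (congr_fun h i))

theorem complexify_add_star (p : (n → ℝ) × (n → ℝ)) :
    complexify p + star (complexify p) = complexify (2 • p.1, 0) := by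
  funext i
  apply Complex.ext <;> simp [complexify, two_smul]

noncomputable def periodMap (B : LinearMap.BilinForm ℝ (n → ℝ)) (p : B.orthoPairs) : ℙ ℂ (n → ℂ) :=
  Projectivization.mk ℂ (complexify p.1)
    (complexify_ne_zero (LinearMap.BilinForm.fst_ne_zero_of_mem_orthoPairs p.2))

theorem continuous_periodMap (B : LinearMap.BilinForm ℝ (n → ℝ)) :
    Continuous (periodMap B) :=
  continuous_quotient_mk'.comp ((continuous_complexify.comp continuous_subtype_val).subtype_mk _)

end PeriodDomain

section MatrixForm

variable {b : ℕ} {G : Matrix (Fin b) (Fin b) ℝ}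

theorem toBilin'_apply_eq_formR (x y : Fin b → ℝ) : Matrix.toBilin' G x y = formR G x y :=
  Matrix.toBilin'_apply' G x y

theorem formC_complexify (p q : (Fin b → ℝ) × (Fin b → ℝ)) :
    formC G (complexify p) (complexify q) =
      ⟨formR G p.1 q.1 - formR G p.2 q.2, formR G p.1 q.2 + formR G p.2 q.1⟩ := by
  simp [formC, formR, complexify, dotProduct, mulVec, Complex.ext_iff, Complex.re_sum,
    Complex.im_sum, Finset.mul_sum, ← Finset.sum_sub_distrib, ← Finset.sum_add_distrib]

theorem mem_orthoPairs_toBilin'_iff (hG : G.IsSymm) (p : (Fin b → ℝ) × (Fin b → ℝ)) :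
    p ∈ (Matrix.toBilin' G).orthoPairs ↔ formC G (complexify p) (complexify p) = 0 ∧
      0 < (formC G (complexify p + star (complexify p))
        (complexify p + star (complexify p))).re := by
  have hsymm : formR G p.2 p.1 = formR G p.1 p.2 := by
    simpa only [toBilin'_apply_eq_formR] using
      (Matrix.isSymm_toBilin'_iff_isSymm.mpr hG).eq p.2 p.1
  have hdouble : formR G (2 • p.1) (2 • p.1) = 4 * formR G p.1 p.1 := by
    simp only [formR, two_smul, add_dotProduct, mulVec_add, dotProduct_add]
    ring
  have hzero : formR G 0 0 = 0 := by simp [formR]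
  rw [complexify_add_star, formC_complexify, formC_complexify]
  simp only [LinearMap.BilinForm.orthoPairs, Set.mem_ofPred_eq, toBilin'_apply_eq_formR,
    Complex.ext_iff, Complex.zero_re, Complex.zero_im, hsymm, hdouble, hzero]
  constructor
  · rintro ⟨h1, h2, h3⟩
    exact ⟨⟨by linarith, by linarith⟩, by linarith⟩
  · rintro ⟨⟨h1, h2⟩, h3⟩
    exact ⟨by linarith, by linarith, by linarith⟩

theorem range_periodMap (hG : G.IsSymm) :
    Set.range (periodMap (Matrix.toBilin' G)) = periodDomain G := by
  ext x
  constructor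
  · rintro ⟨p, rfl⟩
    exact ⟨complexify p.1, _, rfl, (mem_orthoPairs_toBilin'_iff hG p.1).mp p.2⟩
  · rintro ⟨z, hz, rfl, hzz⟩
    -- `complexify` of the real and imaginary parts of `z` is `z` itself, by structure eta.
    exact ⟨⟨(fun i => (z i).re, fun i => (z i).im), (mem_orthoPairs_toBilin'_iff hG _).mpr hzz⟩,
      rfl⟩

end MatrixForm

theorem stmt5_general (b : ℕ) (G : Matrix (Fin b) (Fin b) ℝ)
    (hsymm : G.IsSymm)
    (hsig : ∃ F : Submodule ℝ (Fin b → ℝ), Module.finrank ℝ F = 3 ∧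
      ∀ x ∈ F, x ≠ 0 → 0 < formR G x x)
    (hmax : ∀ F : Submodule ℝ (Fin b → ℝ),
      (∀ x ∈ F, x ≠ 0 → 0 < formR G x x) → Module.finrank ℝ F ≤ 3) :
    IsConnected (periodDomain G) := by
  obtain ⟨F, hF3, hF⟩ := hsig
  simp only [← toBilin'_apply_eq_formR] at hF hmax
  set B := Matrix.toBilin' G
  have hB : B.IsSymm := Matrix.isSymm_toBilin'_iff_isSymm.mpr hsymm
  have hBc : Continuous fun p : (Fin b → ℝ) × (Fin b → ℝ) => B p.1 p.2 := by
    simp only [B, Matrix.toBilin'_apply']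
    fun_prop
  have hneg : ∀ x ∈ B.orthogonal F, B x x ≤ 0 := fun x hx =>
    LinearMap.BilinForm.apply_self_nonpos_of_mem_orthogonal hB hF (hF3 ▸ hmax) hx
  have : ConnectedSpace B.orthoPairs := isConnected_iff_connectedSpace.mp
    (LinearMap.BilinForm.isPathConnected_orthoPairs hB hBc hF hF3.ge hneg).isConnected
  rw [← range_periodMap hsymm]
  exact isConnected_range (continuous_periodMap B)

/-- For a nondegenerate symmetric bilinear form of signature `(3, b−3)` on a real vector
space `V` of dimension `b > 3`, the period domain `Q ⊂ ℙ(V_ℂ)` is connected. -/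
theorem stmt5 (b : ℕ) (hb : 3 < b) (G : Matrix (Fin b) (Fin b) ℝ)
    (hsymm : G.IsSymm) (hdet : G.det ≠ 0)
    (hsig : ∃ F : Submodule ℝ (Fin b → ℝ), Module.finrank ℝ F = 3 ∧
      ∀ x ∈ F, x ≠ 0 → 0 < formR G x x)
    (hmax : ∀ F : Submodule ℝ (Fin b → ℝ),
      (∀ x ∈ F, x ≠ 0 → 0 < formR G x x) → Module.finrank ℝ F ≤ 3) :
    IsConnected (periodDomain G) :=
  stmt5_general b G hsymm hsig hmax
end

section
/- Let V be a finite-dimensional real vector space with a nondegenerate symmetric bilinear form of signature (3, b−3) with b = dim V ≥ 4. Then for every nonzero α ∈ V there exists x ∈ V_ℂ with ⟨x,x⟩ = 0, ⟨x + x̄, x + x̄⟩ > 0 and ⟨x, α⟩ = 0; equivalently, the hyperplane α^⊥ meets the period domain Q. -/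
/-!
A positive definite `3`-plane `F` meets the hyperplane `α^⊥` in a subspace of dimension at
least `2`. Any plane contains nonzero `u, w` with `⟨u, w⟩ = 0`; rescaling `w` so that
`⟨w, w⟩ = ⟨u, u⟩ > 0`, the vector `x = u + i w` is isotropic, has `⟨x + x̄, x + x̄⟩ > 0`,
and is orthogonal to `α`.
-/

open Module

theorem Submodule.finrank_le_finrank_inf_ker_add_one {K V : Type*} [DivisionRing K]
    [AddCommGroup V] [Module K V] [FiniteDimensional K V] (F : Submodule K V) (f : Dual K V) :
    finrank K F ≤ finrank K ↥(F ⊓ LinearMap.ker f) + 1 := by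
  have hker : finrank K V ≤ finrank K (LinearMap.ker f) + 1 := by
    rcases eq_or_ne f 0 with rfl | hf
    · rw [LinearMap.ker_zero, finrank_top]
      omega
    · exact (f.finrank_ker_add_one_of_ne_zero hf).ge
  have := Submodule.finrank_sup_add_finrank_inf_eq F (LinearMap.ker f)
  have := Submodule.finrank_le (F ⊔ LinearMap.ker f)
  omega

namespace LinearMap.BilinForm

theorem exists_orthogonal_pair_of_two_le_finrank {K V : Type*} [Field K] [AddCommGroup V]
    [Module K V] [FiniteDimensional K V] (b : LinearMap.BilinForm K V) {P : Submodule K V}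
    (hP : 2 ≤ finrank K P) : ∃ u ∈ P, ∃ w ∈ P, u ≠ 0 ∧ w ≠ 0 ∧ b u w = 0 := by
  obtain ⟨u, huP, hu0⟩ :=
    Submodule.exists_mem_ne_zero_of_ne_bot (Submodule.one_le_finrank_iff.mp (one_le_two.trans hP))
  have hPu : 1 ≤ finrank K ↥(P ⊓ LinearMap.ker (b u)) := by
    have := P.finrank_le_finrank_inf_ker_add_one (b u)
    omega
  obtain ⟨w, ⟨hwP, huw⟩, hw0⟩ :=
    Submodule.exists_mem_ne_zero_of_ne_bot (Submodule.one_le_finrank_iff.mp hPu)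
  exact ⟨u, huP, w, hwP, hu0, hw0, huw⟩

theorem exists_smul_apply_smul_eq {V : Type*} [AddCommGroup V] [Module ℝ V]
    (b : LinearMap.BilinForm ℝ V) {w : V} (hw : 0 < b w w) {c : ℝ} (hc : 0 ≤ c) :
    ∃ t : ℝ, b (t • w) (t • w) = c := by
  refine ⟨√(c / b w w), ?_⟩
  simp only [map_smul, LinearMap.smul_apply, smul_eq_mul]
  rw [← mul_assoc, Real.mul_self_sqrt (div_nonneg hc hw.le), div_mul_cancel₀ c hw.ne']

end LinearMap.BilinForm

theorem stmt7_general {V : Type*} [AddCommGroup V] [Module ℝ V] [FiniteDimensional ℝ V]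
    (b : LinearMap.BilinForm ℝ V)
    (hsig : ∃ F : Submodule ℝ V, Module.finrank ℝ F = 3 ∧ ∀ x ∈ F, x ≠ 0 → 0 < b x x)
    (α : V) :
    ∃ xr xi : V, b xr xr = b xi xi ∧ b xr xi = 0 ∧ 0 < b xr xr ∧
      b xr α = 0 ∧ b xi α = 0 := by
  obtain ⟨F, hF3, hFpos⟩ := hsig
  have hP : 2 ≤ finrank ℝ ↥(F ⊓ LinearMap.ker (b.flip α)) := by
    have := F.finrank_le_finrank_inf_ker_add_one (b.flip α)
    omega
  obtain ⟨u, ⟨huF, huα⟩, w, ⟨hwF, hwα⟩, hu0, hw0, huw⟩ :=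
    b.exists_orthogonal_pair_of_two_le_finrank hP
  have huu : 0 < b u u := hFpos u huF hu0
  obtain ⟨t, ht⟩ := b.exists_smul_apply_smul_eq (hFpos w hwF hw0) huu.le
  refine ⟨u, t • w, ht.symm, ?_, huu, huα, ?_⟩
  · rw [map_smul, smul_eq_mul, huw, mul_zero]
  · rw [map_smul, LinearMap.smul_apply, smul_eq_mul, ← b.flip_apply, LinearMap.mem_ker.mp hwα,
      mul_zero]

/-- Let `V` be a finite-dimensional real vector space with a nondegenerate symmetric
bilinear form of signature `(3, b−3)`, `b = dim V ≥ 4`.  Representing `x ∈ V_ℂ` by its real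
and imaginary parts `(xr, xi)`, the conditions `⟨x,x⟩ = 0`, `⟨x + x̄, x + x̄⟩ > 0` and
`⟨x, α⟩ = 0` read, respectively: `b xr xr = b xi xi ∧ b xr xi = 0`, `0 < b xr xr`, and
`b xr α = 0 ∧ b xi α = 0`.  For every nonzero `α ∈ V` such an `x` exists; equivalently, the
hyperplane `α^⊥` meets the period domain `Q`. -/
theorem stmt7 {V : Type*} [AddCommGroup V] [Module ℝ V] [FiniteDimensional ℝ V]
    (b : LinearMap.BilinForm ℝ V) (hsymm : ∀ x y, b x y = b y x)
    (hdim : 4 ≤ Module.finrank ℝ V)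
    (hnd : ∀ x : V, (∀ y, b x y = 0) → x = 0)
    (hsig : ∃ F : Submodule ℝ V, Module.finrank ℝ F = 3 ∧ ∀ x ∈ F, x ≠ 0 → 0 < b x x)
    (hmax : ∀ F : Submodule ℝ V, (∀ x ∈ F, x ≠ 0 → 0 < b x x) → Module.finrank ℝ F ≤ 3)
    (α : V) (hα : α ≠ 0) :
    ∃ xr xi : V, b xr xr = b xi xi ∧ b xr xi = 0 ∧ 0 < b xr xr ∧
      b xr α = 0 ∧ b xi α = 0 :=
  stmt7_general b hsig α
end

section
/- Let L be a free ℤ-module of finite rank ≥ 1 with a ℤ-valued symmetric bilinear form ⟨·,·⟩. Then the subset {[x ⊗ 1] ∈ ℙ(L_ℝ) : x ∈ L is primitive and ⟨x,x⟩ ≡ 0 (mod 4)} of the real projectivization ℙ(L_ℝ) is either empty or dense in ℙ(L_ℝ). -/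
open Matrix
open scoped LinearAlgebra.Projectivization

/-- The ℤ-valued bilinear form of the lattice `L = ℤ^n` with Gram matrix `G`. -/
def formZ {n : ℕ} (G : Matrix (Fin n) (Fin n) ℤ) (x y : Fin n → ℤ) : ℤ :=
  x ⬝ᵥ (G *ᵥ y)

/-- `x ∈ L` is primitive: `x ≠ 0` and `x = m • y` implies `m = ±1`. -/
def IsPrimitive {n : ℕ} (x : Fin n → ℤ) : Prop :=
  x ≠ 0 ∧ ∀ (m : ℤ) (y : Fin n → ℤ), x = m • y → m = 1 ∨ m = -1

/-!
If `x₀` is primitive with `4 ∣ ⟨x₀, x₀⟩`, then `x₀` has an odd coordinate, and so has every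
`z = x₀ + 4 y` with `y ∈ L`; moreover `⟨z, z⟩ ≡ ⟨x₀, x₀⟩ ≡ 0 (mod 4)`. Writing `z = d z'` with
`z'` primitive, `d` is odd, hence `4 ∣ ⟨z', z'⟩`, and `[z'] = [z]`. Taking `y = ⌊m v⌋`, the
vectors `z / 4m` converge to any given `v ≠ 0`, so `[v]` lies in the closure of the set.
-/

open Filter Topology

namespace Projectivization

variable {K V : Type*} [DivisionRing K] [AddCommGroup V] [Module K V] [TopologicalSpace V]

lemma continuous_mk' : Continuous (mk' K : {v : V // v ≠ 0} → ℙ K V) :=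
  continuous_quotient_mk'

lemma mk_mem_closure_of_tendsto_smul {ι : Type*} {l : Filter ι} {S : Set (ℙ K V)}
    {c : ι → K} {w : ι → V} {v : V} (hv : v ≠ 0) (hc : ∀ᶠ i in l, c i ≠ 0)
    (hw : ∀ᶠ i in l, ∃ h : w i ≠ 0, mk K (w i) h ∈ S)
    (hlim : Tendsto (fun i => c i • w i) l (𝓝 v)) [l.NeBot] :
    mk K v hv ∈ closure S := by
  rw [mem_closure_iff_nhds]
  intro U hU
  obtain ⟨W, hW, hWU⟩ := (mem_nhds_subtype _ _ _).1
    (continuous_mk'.continuousAt.preimage_mem_nhds (x := ⟨v, hv⟩) hU)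
  obtain ⟨i, hci, ⟨hwi, hwS⟩, hcwW⟩ := (hc.and (hw.and (hlim hW))).exists
  have hcw : c i • w i ≠ 0 := smul_ne_zero hci hwi
  have hmk : mk K (c i • w i) hcw = mk K (w i) hwi := (mk_eq_mk_iff' K _ _ _ _).2 ⟨c i, rfl⟩
  exact ⟨_, hmk ▸ hWU (a := ⟨c i • w i, hcw⟩) hcwW, hwS⟩

end Projectivization

lemma tendsto_intFloor_mul_div (a : ℝ) :
    Tendsto (fun m : ℕ => (⌊m * a⌋ : ℝ) / m) atTop (𝓝 a) := by
  have hlow : Tendsto (fun m : ℕ => a - 1 / (m : ℝ)) atTop (𝓝 a) := by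
    simpa using tendsto_const_nhds.sub (tendsto_one_div_atTop_nhds_zero_nat (𝕜 := ℝ))
  refine tendsto_of_tendsto_of_tendsto_of_le_of_le' hlow tendsto_const_nhds ?_ ?_
  all_goals
    filter_upwards [eventually_gt_atTop 0] with m hm
    have hm' : (0 : ℝ) < m := Nat.cast_pos.2 hm
  · rw [le_div_iff₀ hm', sub_mul, one_div_mul_cancel hm'.ne']
    linarith [Int.sub_one_lt_floor ((m : ℝ) * a)]
  · rw [div_le_iff₀ hm', mul_comm]
    exact Int.floor_le _

section Lattice

variable {n : ℕ}

lemma formZ_smul (G : Matrix (Fin n) (Fin n) ℤ) (d : ℤ) (x : Fin n → ℤ) :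
    formZ G (d • x) (d • x) = d ^ 2 * formZ G x x := by
  simp only [formZ, Matrix.mulVec_smul, dotProduct_smul, smul_dotProduct, smul_eq_mul]
  ring

lemma formZ_add_smul (G : Matrix (Fin n) (Fin n) ℤ) (x w : Fin n → ℤ) (c : ℤ) :
    formZ G (x + c • w) (x + c • w) =
      formZ G x x + c * (formZ G x w + formZ G w x) + c ^ 2 * formZ G w w := by
  simp only [formZ, Matrix.mulVec_add, Matrix.mulVec_smul, dotProduct_add, add_dotProduct,
    dotProduct_smul, smul_dotProduct, smul_eq_mul]
  ring

lemma four_dvd_formZ_add_four_smul {G : Matrix (Fin n) (Fin n) ℤ} {x : Fin n → ℤ}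
    (hx : 4 ∣ formZ G x x) (w : Fin n → ℤ) : 4 ∣ formZ G (x + (4 : ℤ) • w) (x + (4 : ℤ) • w) := by
  rw [formZ_add_smul]
  exact dvd_add (dvd_add hx (dvd_mul_right _ _)) ⟨4 * formZ G w w, by ring⟩

lemma isPrimitive_of_gcd_eq_one {x : Fin n → ℤ} (hx : Finset.univ.gcd x = 1) : IsPrimitive x := by
  refine ⟨?_, fun m y hxy => Int.isUnit_iff.1 (isUnit_of_dvd_one ?_)⟩
  · rintro rfl
    exact one_ne_zero (hx ▸ Finset.gcd_eq_zero_iff.2 fun _ _ => rfl)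
  · exact hx ▸ Finset.dvd_gcd fun i _ => ⟨y i, by simp [hxy]⟩

lemma exists_eq_smul_isPrimitive {z : Fin n → ℤ} (hz : z ≠ 0) :
    ∃ (d : ℤ) (z' : Fin n → ℤ), z = d • z' ∧ IsPrimitive z' := by
  obtain ⟨i, -⟩ := Function.ne_iff.1 hz
  obtain ⟨z', hz', hgcd⟩ := Finset.univ.extract_gcd z ⟨i, Finset.mem_univ i⟩
  exact ⟨_, z', funext fun j => hz' j (Finset.mem_univ j), isPrimitive_of_gcd_eq_one hgcd⟩

lemma IsPrimitive.exists_odd {x : Fin n → ℤ} (hx : IsPrimitive x) : ∃ j, Odd (x j) := by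
  by_contra! h
  have hx2 : x = (2 : ℤ) • fun i => x i / 2 := funext fun i =>
    (Int.mul_ediv_cancel' (even_iff_two_dvd.1 (Int.not_odd_iff_even.1 (h i)))).symm
  rcases hx.2 2 _ hx2 with h2 | h2 <;> norm_num at h2

lemma exists_eq_smul_isPrimitive_four_dvd {G : Matrix (Fin n) (Fin n) ℤ} {z : Fin n → ℤ}
    {j : Fin n} (hj : Odd (z j)) (hz : 4 ∣ formZ G z z) :
    ∃ (d : ℤ) (z' : Fin n → ℤ), z = d • z' ∧ IsPrimitive z' ∧ 4 ∣ formZ G z' z' := by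
  obtain ⟨d, z', rfl, hz'⟩ := exists_eq_smul_isPrimitive (z := z) fun h0 => by simp [h0] at hj
  have hd : Odd d := Int.Odd.of_mul_left (by simpa using hj)
  rw [formZ_smul] at hz
  have hcop : IsCoprime (4 : ℤ) (d ^ 2) := by
    simpa using (Int.isCoprime_two_left.2 hd).pow (m := 2) (n := 2)
  exact ⟨d, z', rfl, hz', hcop.dvd_of_dvd_mul_left hz⟩

lemma intCast_ne_zero_of_ne_zero {x : Fin n → ℤ} (hx : x ≠ 0) : (fun i => (x i : ℝ)) ≠ 0 :=
  fun h => hx (funext fun i => Int.cast_eq_zero.1 (congrFun h i))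

end Lattice

def primitiveFourDvdLines {n : ℕ} (G : Matrix (Fin n) (Fin n) ℤ) : Set (ℙ ℝ (Fin n → ℝ)) :=
  {p | ∃ (x : Fin n → ℤ) (h : (fun i => (x i : ℝ)) ≠ 0),
    IsPrimitive x ∧ (4 : ℤ) ∣ formZ G x x ∧ p = Projectivization.mk ℝ (fun i => (x i : ℝ)) h}

lemma exists_mk_mem_primitiveFourDvdLines {n : ℕ} {G : Matrix (Fin n) (Fin n) ℤ}
    {z : Fin n → ℤ} {j : Fin n} (hj : Odd (z j)) (hz : 4 ∣ formZ G z z) :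
    ∃ h : (fun i => (z i : ℝ)) ≠ 0,
      Projectivization.mk ℝ (fun i => (z i : ℝ)) h ∈ primitiveFourDvdLines G := by
  have hz0 : z ≠ 0 := fun h0 => by simp [h0] at hj
  obtain ⟨d, z', rfl, hz', h4⟩ := exists_eq_smul_isPrimitive_four_dvd hj hz
  have hcast : (fun i => ((d • z') i : ℝ)) = (d : ℝ) • fun i => (z' i : ℝ) := by
    ext i
    simp
  exact ⟨intCast_ne_zero_of_ne_zero hz0, z', intCast_ne_zero_of_ne_zero hz'.1, hz', h4,
    (Projectivization.mk_eq_mk_iff' ℝ _ _ _ _).2 ⟨d, hcast.symm⟩⟩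

section Approximation

variable {n : ℕ}

noncomputable def latticeApprox (x : Fin n → ℤ) (v : Fin n → ℝ) (m : ℕ) : Fin n → ℤ :=
  x + (4 : ℤ) • fun i => ⌊m * v i⌋

lemma odd_latticeApprox {x : Fin n → ℤ} {j : Fin n} (hj : Odd (x j)) (v : Fin n → ℝ) (m : ℕ) :
    Odd (latticeApprox x v m j) := by
  simpa [latticeApprox] using hj.add_even (even_two.mul_right 2 |>.mul_right _)

lemma tendsto_latticeApprox (x : Fin n → ℤ) (v : Fin n → ℝ) :
    Tendsto (fun m : ℕ => (4 * m : ℝ)⁻¹ • fun i => (latticeApprox x v m i : ℝ)) atTop (𝓝 v) := by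
  refine tendsto_pi_nhds.2 fun i => ?_
  have hcoord : ∀ m : ℕ, ((4 * m : ℝ)⁻¹ • fun i => (latticeApprox x v m i : ℝ)) i =
      (x i / 4 : ℝ) / m + (⌊m * v i⌋ : ℝ) / m := by
    intro m
    simp only [latticeApprox, Pi.smul_apply, Pi.add_apply, smul_eq_mul, Int.cast_add,
      Int.cast_mul, Int.cast_ofNat]
    ring
  simp only [hcoord]
  simpa using (tendsto_const_div_atTop_nhds_zero_nat (x i / 4 : ℝ)).add
    (tendsto_intFloor_mul_div (v i))

end Approximation

theorem stmt11_general (n : ℕ) (G : Matrix (Fin n) (Fin n) ℤ) :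
    {p : ℙ ℝ (Fin n → ℝ) |
        ∃ (x : Fin n → ℤ) (h : (fun i => (x i : ℝ)) ≠ 0),
          IsPrimitive x ∧ (4 : ℤ) ∣ formZ G x x ∧
          p = Projectivization.mk ℝ (fun i => (x i : ℝ)) h} = ∅ ∨
    Dense {p : ℙ ℝ (Fin n → ℝ) |
        ∃ (x : Fin n → ℤ) (h : (fun i => (x i : ℝ)) ≠ 0),
          IsPrimitive x ∧ (4 : ℤ) ∣ formZ G x x ∧
          p = Projectivization.mk ℝ (fun i => (x i : ℝ)) h} := by
  change primitiveFourDvdLines G = ∅ ∨ Dense (primitiveFourDvdLines G)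
  refine or_iff_not_imp_left.2 fun hS => ?_
  obtain ⟨-, x, -, hx, hx4, -⟩ := Set.nonempty_iff_ne_empty.2 hS
  obtain ⟨j, hj⟩ := hx.exists_odd
  refine Projectivization.ind fun v hv =>
    Projectivization.mk_mem_closure_of_tendsto_smul hv ?_ ?_ (tendsto_latticeApprox x v)
  · filter_upwards [eventually_ne_atTop 0] with m hm
    positivity
  · exact Eventually.of_forall fun m => exists_mk_mem_primitiveFourDvdLines
      (odd_latticeApprox hj v m) (four_dvd_formZ_add_four_smul hx4 _)

/-- Let `L` be a free ℤ-module of finite rank `≥ 1` with a ℤ-valued symmetric bilinear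
form.  The set of lines `[x ⊗ 1] ∈ ℙ(L_ℝ)` spanned by primitive `x ∈ L` with
`⟨x,x⟩ ≡ 0 (mod 4)` is either empty or dense in `ℙ(L_ℝ)`. -/
theorem stmt11 (n : ℕ) (hn : 1 ≤ n) (G : Matrix (Fin n) (Fin n) ℤ) (hsymm : G.IsSymm) :
    {p : ℙ ℝ (Fin n → ℝ) |
        ∃ (x : Fin n → ℤ) (h : (fun i => (x i : ℝ)) ≠ 0),
          IsPrimitive x ∧ (4 : ℤ) ∣ formZ G x x ∧
          p = Projectivization.mk ℝ (fun i => (x i : ℝ)) h} = ∅ ∨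
    Dense {p : ℙ ℝ (Fin n → ℝ) |
        ∃ (x : Fin n → ℤ) (h : (fun i => (x i : ℝ)) ≠ 0),
          IsPrimitive x ∧ (4 : ℤ) ∣ formZ G x x ∧
          p = Projectivization.mk ℝ (fun i => (x i : ℝ)) h} :=
  stmt11_general n G
end
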